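/- arXiv:2309.13088 — 2 statements merged into one kernel-verified Lean document; each statement's English description precedes it below -/
import Mathlib

section
/- Let α ∈ (0,1], λ > 0, n ∈ ℕ, and define y(x) = C_n^{(λ)}(x^α) where C_n^{(λ)} is the classical Gegenbauer polynomial. Then for x > 0, y satisfies the conformable Gegenbauer equation (1 - x^{2α})·D^α(D^α y)(x) - α(2λ+1)·x^α·D^α y(x) + α² n(n+2λ)·y(x) = 0. -/
open Real Filter Finset

/-- Conformable derivative of order `a` at `x`: `D^a f (x) = x^(1-a) * f'(x)`. -/
noncomputable def confDeriv (a : ℝ) (f : ℝ → ℝ) (x : ℝ) : ℝ := x ^ (1 - a) * deriv f x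

/-- Gegenbauer polynomial `C_n^{(l)}(z)` as an explicit finite sum. -/
noncomputable def gegenbauer (n : ℕ) (l : ℝ) (z : ℝ) : ℝ :=
  ∑ k ∈ Finset.range (n / 2 + 1),
    (-1 : ℝ) ^ k * Real.Gamma ((n - k : ℕ) + l) /
      (Real.Gamma l * (k.factorial : ℝ) * ((n - 2 * k).factorial : ℝ)) * (2 * z) ^ (n - 2 * k)

/-!
For `x > 0` the chain rule gives `D^α (f ∘ (· ^ α)) = α · (f' ∘ (· ^ α))`, because
`x^{1-α} · α x^{α-1} = α`; applied twice with `f = C_n^{(λ)}`, this turns the conformable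
equation at `x` into `α²` times the classical Gegenbauer equation at `t = x^α`. The classical
equation is checked on the explicit sum: the Gegenbauer operator sends `(2t)^m` to
`4m(m-1)(2t)^{m-2} + (n(n+2λ) - m(m+2λ))(2t)^m`, and the coefficient recurrence
`(k+1)(n-k-1+λ) c_{k+1} = -(n-2k)(n-2k-1) c_k`, a consequence of `Γ(s+1) = sΓ(s)`, makes the
resulting sum telescope to zero.
-/

open Polynomial Topology

theorem Finset.sum_range_succ_add_shift {M : Type*} [AddCommMonoid M] (f g : ℕ → M) (N : ℕ)
    (hf : f N = 0) (hg : g 0 = 0) :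
    ∑ k ∈ range (N + 1), (f k + g k) = ∑ k ∈ range N, (f k + g (k + 1)) := by
  rw [sum_add_distrib, sum_range_succ, sum_range_succ' g, hf, hg, add_zero, add_zero,
    sum_add_distrib]

section Conformable

variable {α x : ℝ} {f : ℝ → ℝ}

theorem confDeriv_comp_rpow (hx : 0 < x) (hf : DifferentiableAt ℝ f (x ^ α)) :
    confDeriv α (fun t => f (t ^ α)) x = α * deriv f (x ^ α) := by
  have hcomp : HasDerivAt (fun t => f (t ^ α)) (deriv f (x ^ α) * (α * x ^ (α - 1))) x :=
    hf.hasDerivAt.comp x (hasDerivAt_rpow_const (Or.inl hx.ne'))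
  have hcancel : x ^ (1 - α) * x ^ (α - 1) = 1 := by
    rw [← rpow_add hx, sub_add_sub_cancel', sub_self, rpow_zero]
  rw [confDeriv, hcomp.deriv]
  linear_combination α * deriv f (x ^ α) * hcancel

theorem confDeriv_confDeriv_comp_rpow (hx : 0 < x) (hf : Differentiable ℝ f)
    (hf' : DifferentiableAt ℝ (deriv f) (x ^ α)) :
    confDeriv α (confDeriv α (fun t => f (t ^ α))) x = α ^ 2 * deriv (deriv f) (x ^ α) := by
  have hfirst : confDeriv α (fun t => f (t ^ α)) =ᶠ[𝓝 x] fun t => α * deriv f (t ^ α) := by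
    filter_upwards [Ioi_mem_nhds hx] with t ht using confDeriv_comp_rpow ht (hf _)
  calc confDeriv α (confDeriv α (fun t => f (t ^ α))) x
      = α * confDeriv α (fun t => deriv f (t ^ α)) x := by
        rw [confDeriv, hfirst.deriv_eq, deriv_const_mul_field', confDeriv]; ring
    _ = α ^ 2 * deriv (deriv f) (x ^ α) := by rw [confDeriv_comp_rpow hx hf']; ring

end Conformable

noncomputable def gegenbauerCoeff (n : ℕ) (l : ℝ) (k : ℕ) : ℝ :=
  (-1) ^ k * Gamma ((n - k : ℕ) + l) / (Gamma l * k.factorial * (n - 2 * k).factorial)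

theorem gegenbauerCoeff_succ {l : ℝ} (hl : 0 < l) {n k : ℕ} (hk : 2 * (k + 1) ≤ n) :
    (k + 1) * (n - k - 1 + l) * gegenbauerCoeff n l (k + 1)
      = -((n - 2 * k) * (n - 2 * k - 1) * gegenbauerCoeff n l k) := by
  obtain ⟨j, rfl⟩ : ∃ j, n = j + 2 * (k + 1) := ⟨n - 2 * (k + 1), by omega⟩
  rw [gegenbauerCoeff, gegenbauerCoeff, show j + 2 * (k + 1) - k = j + k + 1 + 1 by omega,
    show j + 2 * (k + 1) - (k + 1) = j + k + 1 by omega,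
    show j + 2 * (k + 1) - 2 * k = j + 1 + 1 by omega,
    show j + 2 * (k + 1) - 2 * (k + 1) = j by omega, Nat.factorial_succ, Nat.factorial_succ,
    Nat.factorial_succ, Nat.cast_succ (j + k + 1), add_right_comm _ 1 l,
    Gamma_add_one (by positivity)]
  have := (Gamma_pos_of_pos hl).ne'
  field_simp
  push_cast
  ring

noncomputable def gegenbauerPoly (n : ℕ) (l : ℝ) : ℝ[X] :=
  ∑ k ∈ range (n / 2 + 1), gegenbauerCoeff n l k • (C 2 * X) ^ (n - 2 * k)

theorem gegenbauer_eq_eval (n : ℕ) (l : ℝ) :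
    gegenbauer n l = fun z => (gegenbauerPoly n l).eval z := by
  ext z
  simp [gegenbauerPoly, gegenbauer, gegenbauerCoeff, eval_finsetSum]

theorem deriv_gegenbauer (n : ℕ) (l : ℝ) :
    deriv (gegenbauer n l) = fun z => (derivative (gegenbauerPoly n l)).eval z := by
  rw [gegenbauer_eq_eval]
  exact funext fun z => Polynomial.deriv _

theorem derivative_two_mul_X_pow (m : ℕ) :
    derivative ((C 2 * X) ^ m : ℝ[X]) = (2 * m : ℝ) • (C 2 * X) ^ (m - 1) := by
  rw [derivative_pow, derivative_C_mul_X, smul_eq_C_mul, C_mul, C_ofNat, map_natCast]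
  ring

noncomputable def gegenbauerOp (n : ℕ) (l : ℝ) : ℝ[X] →ₗ[ℝ] ℝ[X] where
  toFun p := (1 - X ^ 2) * derivative (derivative p) - C (2 * l + 1) * X * derivative p
    + C ((n : ℝ) * (n + 2 * l)) * p
  map_add' p q := by simp only [map_add]; ring
  map_smul' c p := by
    simp only [derivative_smul, mul_smul_comm, smul_sub, smul_add, RingHom.id_apply]

theorem gegenbauerOp_two_mul_X_pow (n : ℕ) (l : ℝ) (m : ℕ) :
    gegenbauerOp n l ((C 2 * X) ^ m) = (4 * (m : ℝ) * (m - 1)) • (C 2 * X) ^ (m - 2)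
        + ((n : ℝ) * (n + 2 * l) - m * (m + 2 * l)) • (C 2 * X) ^ m := by
  simp only [gegenbauerOp, LinearMap.coe_mk, AddHom.coe_mk, derivative_two_mul_X_pow,
    derivative_smul, Nat.sub_sub]
  rcases m with _ | _ | m <;> simp [smul_eq_C_mul, pow_succ, map_ofNat] <;> ring

theorem gegenbauerOp_gegenbauerPoly {l : ℝ} (hl : 0 < l) (n : ℕ) :
    gegenbauerOp n l (gegenbauerPoly n l) = 0 := by
  set c := gegenbauerCoeff n l
  have hterm : ∀ k ∈ range (n / 2 + 1), gegenbauerOp n l (c k • (C 2 * X) ^ (n - 2 * k))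
      = (4 * (n - 2 * k) * (n - 2 * k - 1) * c k) • (C 2 * X) ^ (n - 2 * (k + 1))
        + (4 * k * (n - k + l) * c k) • (C 2 * X) ^ (n - 2 * k) := by
    intro k hk
    have hkn : 2 * k ≤ n := by have := mem_range.mp hk; omega
    rw [map_smul, gegenbauerOp_two_mul_X_pow, smul_add, smul_smul, smul_smul,
      show n - 2 * (k + 1) = n - 2 * k - 2 by omega]
    push_cast [hkn]
    congr 2 <;> ring
  have hlast : (n : ℝ) - 2 * (n / 2 : ℕ) = (n % 2 : ℕ) := by
    have := congrArg (Nat.cast (R := ℝ)) (Nat.div_add_mod n 2)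
    push_cast at this
    linarith
  rw [gegenbauerPoly, map_sum, sum_congr rfl hterm, sum_range_succ_add_shift _ _ _ ?_ (by simp)]
  · refine sum_eq_zero fun k hk => ?_
    have hk2 : 2 * (k + 1) ≤ n := by have := mem_range.mp hk; omega
    have hcancel : 4 * (n - 2 * k) * (n - 2 * k - 1) * c k
        + 4 * ((k + 1 : ℕ) : ℝ) * (n - (k + 1 : ℕ) + l) * c (k + 1) = 0 := by
      push_cast
      linear_combination 4 * gegenbauerCoeff_succ hl hk2
    rw [← add_smul, hcancel, zero_smul]
  · rw [hlast]
    rcases Nat.mod_two_eq_zero_or_one n with h | h <;> simp [h]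

theorem gegenbauer_ode {l : ℝ} (hl : 0 < l) (n : ℕ) (z : ℝ) :
    (1 - z ^ 2) * deriv (deriv (gegenbauer n l)) z - (2 * l + 1) * z * deriv (gegenbauer n l) z
      + n * (n + 2 * l) * gegenbauer n l z = 0 := by
  have hode := congrArg (eval z) (gegenbauerOp_gegenbauerPoly hl n)
  simp only [gegenbauerOp, LinearMap.coe_mk, AddHom.coe_mk] at hode
  rw [deriv_gegenbauer, Polynomial.deriv, gegenbauer_eq_eval]
  simpa using hode

theorem stmt_2_general (α : ℝ) (l : ℝ) (hl : 0 < l) (n : ℕ)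
    (x : ℝ) (hx : 0 < x) :
    (1 - x ^ (2 * α)) * confDeriv α (confDeriv α (fun t : ℝ => gegenbauer n l (t ^ α))) x
      - α * (2 * l + 1) * x ^ α * confDeriv α (fun t : ℝ => gegenbauer n l (t ^ α)) x
      + α ^ 2 * n * (n + 2 * l) * gegenbauer n l (x ^ α) = 0 := by
  have hG : Differentiable ℝ (gegenbauer n l) := by
    rw [gegenbauer_eq_eval]; exact Polynomial.differentiable _
  have hG' : Differentiable ℝ (deriv (gegenbauer n l)) := by
    rw [deriv_gegenbauer]; exact Polynomial.differentiable _
  have hsq : x ^ (2 * α) = (x ^ α) ^ 2 := by rw [mul_comm, rpow_mul hx.le, rpow_two]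
  rw [confDeriv_confDeriv_comp_rpow hx hG (hG' _), confDeriv_comp_rpow hx (hG _), hsq]
  linear_combination α ^ 2 * gegenbauer_ode hl n (x ^ α)

/-- `y(x) = C_n^{(λ)}(x^α)` solves the conformable Gegenbauer equation. -/
theorem stmt_2 (α : ℝ) (hα : α ∈ Set.Ioc (0 : ℝ) 1) (l : ℝ) (hl : 0 < l) (n : ℕ)
    (x : ℝ) (hx : 0 < x) :
    (1 - x ^ (2 * α)) * confDeriv α (confDeriv α (fun t : ℝ => gegenbauer n l (t ^ α))) x
      - α * (2 * l + 1) * x ^ α * confDeriv α (fun t : ℝ => gegenbauer n l (t ^ α)) x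
      + α ^ 2 * n * (n + 2 * l) * gegenbauer n l (x ^ α) = 0 :=
  stmt_2_general α l hl n x hx
end

section
/- If y(x) = Σ_{k≥0} a_k x^{αk} is a formal power-series solution of the conformable Gegenbauer equation (1-x^{2α}) D^α D^α y - α(2λ+1) x^α D^α y + α² β y = 0, then the coefficients satisfy the recurrence a_{k+2} = (k(k+2λ) - β)/((k+1)(k+2)) · a_k for all k ≥ 0. -/
open Real Filter Finset

/-- Coefficient sequence of the termwise conformable derivative of `Σ a_k x^(αk)`:
`D^α(x^(αk)) = α k x^(α(k-1))`. -/
noncomputable def confDcoeff (α : ℝ) (a : ℕ → ℝ) : ℕ → ℝ := fun k => α * (k + 1) * a (k + 1)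

open PowerSeries

section ConformableCoefficients

variable (α : ℝ) (a : ℕ → ℝ) (k : ℕ)

lemma coeff_X_mul_mk_confDcoeff :
    coeff k (X * PowerSeries.mk (confDcoeff α a)) = α * k * a k := by
  cases k with
  | zero => simp
  | succ m => simp [coeff_succ_X_mul, confDcoeff]

-- `(k - 1) * k` vanishes at `k = 0, 1`, so no case split is needed in the statement.
lemma coeff_X_sq_mul_mk_confDcoeff_confDcoeff :
    coeff k (X ^ 2 * PowerSeries.mk (confDcoeff α (confDcoeff α a)))
      = α ^ 2 * (((k : ℝ) - 1) * k) * a k := by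
  rcases k with _ | _ | m
  · simp [coeff_X_pow_mul']
  · simp [coeff_X_pow_mul']
  · rw [coeff_X_pow_mul _ 2 m, PowerSeries.coeff_mk]
    simp only [confDcoeff]
    push_cast
    ring

lemma coeff_conformableGegenbauer (l β : ℝ) :
    coeff k ((1 - X ^ 2) * PowerSeries.mk (confDcoeff α (confDcoeff α a))
        - C (α * (2 * l + 1)) * X * PowerSeries.mk (confDcoeff α a)
        + C (α ^ 2 * β) * PowerSeries.mk a)
      = α ^ 2 * (((k : ℝ) + 1) * ((k : ℝ) + 2) * a (k + 2)
        - ((k : ℝ) * ((k : ℝ) + 2 * l) - β) * a k) := by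
  rw [sub_mul, one_mul, mul_assoc, map_add, map_sub, map_sub, coeff_C_mul, coeff_C_mul,
    coeff_X_sq_mul_mk_confDcoeff_confDcoeff, coeff_X_mul_mk_confDcoeff, PowerSeries.coeff_mk,
    PowerSeries.coeff_mk]
  simp only [confDcoeff]
  push_cast
  ring

end ConformableCoefficients

/-- recurrence for formal power-series solutions of the conformable
Gegenbauer equation, viewed as formal power series in `X = x^α`. -/
theorem stmt_3 (α : ℝ) (hα : α ∈ Set.Ioc (0 : ℝ) 1) (l β : ℝ) (a : ℕ → ℝ)
    (heq : (1 - PowerSeries.X ^ 2) * PowerSeries.mk (confDcoeff α (confDcoeff α a))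
        - PowerSeries.C (R := ℝ) (α * (2 * l + 1)) * PowerSeries.X * PowerSeries.mk (confDcoeff α a)
        + PowerSeries.C (R := ℝ) (α ^ 2 * β) * PowerSeries.mk a = 0) :
    ∀ k : ℕ, a (k + 2) = ((k : ℝ) * ((k : ℝ) + 2 * l) - β) / (((k : ℝ) + 1) * ((k : ℝ) + 2)) * a k := by
  intro k
  have hcoeff := congrArg (coeff k) heq
  rw [coeff_conformableGegenbauer, map_zero, mul_eq_zero, sub_eq_zero] at hcoeff
  have hk : ((k : ℝ) + 1) * ((k : ℝ) + 2) ≠ 0 := by positivity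
  rw [div_mul_eq_mul_div, eq_div_iff hk, mul_comm]
  exact hcoeff.resolve_left (pow_ne_zero 2 hα.1.ne')
end
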